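/- For n ≥ 4 and 1 ≤ t ≤ (n-1)/2, the spectral radius of the graph K_1 ∨ ((t-1)K_2 ∪ (n-2t+1)K_1) is at least √n + 1 - (n-t)/(n-√n). -/

import Mathlib

open SimpleGraph Matrix

/-- `H` is a minor of `G`: branch sets are connected, pairwise disjoint, and
edges of `H` are represented by edges between branch sets. -/
def MinorOf {α : Type*} {β : Type*} (H : SimpleGraph α) (G : SimpleGraph β) : Prop :=
  ∃ f : α → Set β,
    (∀ a, (G.induce (f a)).Connected) ∧
    (Pairwise fun a b => Disjoint (f a) (f b)) ∧
    ∀ a b, H.Adj a b → ∃ u ∈ f a, ∃ v ∈ f b, G.Adj u v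

/-- A graph is outerplanar iff it has no `K₄`-minor and no `K_{2,3}`-minor. -/
def Outerplanar {β : Type*} (G : SimpleGraph β) : Prop :=
  ¬ MinorOf (completeGraph (Fin 4)) G ∧ ¬ MinorOf (completeBipartiteGraph (Fin 2) (Fin 3)) G

/-- The join `G ∨ H` of two graphs. -/
def graphJoin {α β : Type*} (G : SimpleGraph α) (H : SimpleGraph β) : SimpleGraph (α ⊕ β) where
  Adj x y :=
    match x, y with
    | Sum.inl a, Sum.inl b => G.Adj a b
    | Sum.inr a, Sum.inr b => H.Adj a b
    | Sum.inl _, Sum.inr _ => True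
    | Sum.inr _, Sum.inl _ => True
  symm := by constructor; rintro (a|a) (b|b) h <;> first | exact h.symm | trivial
  loopless := by
    constructor; rintro (a|a) h
    · exact G.loopless.irrefl a h
    · exact H.loopless.irrefl a h

open scoped Classical in
/-- The adjacency spectral radius of a finite graph. -/
noncomputable def specRad {V : Type*} [Fintype V] [DecidableEq V]
    (G : SimpleGraph V) : ℝ :=
  sSup (spectrum ℝ (G.adjMatrix ℝ))

/-- The disjoint union of paths with orders given by the list `L`. -/
def pathsUnion (L : List ℕ) : SimpleGraph (Σ i : Fin L.length, Fin (L.get i)) where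
  Adj x y := x.1 = y.1 ∧ (x.2.val + 1 = y.2.val ∨ y.2.val + 1 = x.2.val)
  symm := by constructor; rintro ⟨i, a⟩ ⟨j, b⟩ ⟨h1, h2⟩; exact ⟨h1.symm, h2.symm⟩
  loopless := by constructor; rintro ⟨i, a⟩ ⟨-, h⟩; rcases h with h | h <;> omega

/-- `B_{tl}`: `t` edge-disjoint `l`-cycles sharing exactly one common vertex (`none`). -/
def bouquet (t l : ℕ) : SimpleGraph (Option (Fin t × Fin (l - 1))) where
  Adj x y :=
    match x, y with
    | none, none => False
    | none, some p => p.2.val = 0 ∨ p.2.val = l - 2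
    | some p, none => p.2.val = 0 ∨ p.2.val = l - 2
    | some p, some q => p.1 = q.1 ∧ (p.2.val + 1 = q.2.val ∨ q.2.val + 1 = p.2.val)
  symm := by
    constructor; rintro (_|p) (_|q) h
    · exact h
    · exact h
    · exact h
    · exact ⟨h.1.symm, h.2.symm⟩
  loopless := by
    constructor; rintro (_|p) h
    · exact h
    · rcases h.2 with h' | h' <;> omega

/-- `F` occurs as a subgraph of `G`. -/
def ContainsSubgraph {α β : Type*} (F : SimpleGraph α) (G : SimpleGraph β) : Prop :=
  ∃ f : F →g G, Function.Injective f

/-- `G` has a matching of size `k`. -/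
def HasMatching {V : Type*} (G : SimpleGraph V) (k : ℕ) : Prop :=
  ∃ M : Finset (Sym2 V), M.card = k ∧ ↑M ⊆ G.edgeSet ∧
    (M : Set (Sym2 V)).Pairwise fun e f => ∀ v, v ∈ e → v ∉ f

/-- A linear forest: a disjoint union of (possibly trivial) paths. -/
def IsLinearForest {V : Type*} (H : SimpleGraph V) : Prop :=
  H.IsAcyclic ∧ ∀ v, (H.neighborSet v).ncard ≤ 2

/-- `G` contains a cycle of length `l`. -/
def HasCycleLength {V : Type*} (G : SimpleGraph V) (l : ℕ) : Prop :=
  ∃ (u : V) (w : G.Walk u u), w.IsCycle ∧ w.length = l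
/-- The base graph `(t-1)K₂ ∪ (n-2t+1)K₁` on `m = n-1` vertices: a matching of
`t-1` edges on the first `2(t-1)` vertices, all others isolated. -/
def matchingPlusIsolated (m t : ℕ) : SimpleGraph (Fin m) where
  Adj i j := i ≠ j ∧ i.val < 2 * (t - 1) ∧ j.val < 2 * (t - 1) ∧ i.val / 2 = j.val / 2
  symm := by constructor; rintro i j ⟨h1, h2, h3, h4⟩; exact ⟨h1.symm, h3, h2, h4.symm⟩
  loopless := by constructor; rintro i ⟨h, -⟩; exact h rfl


/-! The graph is the wheel `K₁ ∨ C_{n-1}` with `n - t` rim edges deleted, so we test its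
Rayleigh quotient on the Perron vector of the wheel, rescaled to `(√n - 1, 1, …, 1)`. The
quadratic form is `2(n - 1)(√n - 1) + 2(t - 1)` (hub–rim edges and the `t - 1` matching edges),
the squared norm is `2(n - √n)`, and their quotient is exactly the claimed bound. -/

open Finset

theorem Matrix.IsHermitian.dotProduct_mulVec_self_le_sSup_spectrum {ι : Type*} [Fintype ι]
    [DecidableEq ι] {A : Matrix ι ι ℝ} (hA : A.IsHermitian) (x : ι → ℝ) :
    x ⬝ᵥ (A *ᵥ x) ≤ sSup (spectrum ℝ A) * (x ⬝ᵥ x) := by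
  rcases eq_or_ne x 0 with rfl | hx
  · simp
  set v : EuclideanSpace ℝ ι := WithLp.toLp 2 x
  have hv : v ≠ 0 := by simpa [v] using hx
  have : Nontrivial (EuclideanSpace ℝ ι) := ⟨⟨v, 0, hv⟩⟩
  set T := toEuclideanLin A
  have hT : T.IsSymmetric := isSymmetric_toEuclideanLin_iff.mpr hA
  have hmem := hT.hasEigenvalue_iSup_of_finiteDimensional.mem_spectrum
  rw [spectrum_toLpLin] at hmem
  have hbdd : BddAbove (Set.range fun y : { y : EuclideanSpace ℝ ι // y ≠ 0 } =>
      RCLike.re (inner ℝ (T y) (y : EuclideanSpace ℝ ι)) / ‖(y : EuclideanSpace ℝ ι)‖ ^ 2) := by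
    obtain ⟨C, hC⟩ := (LinearMap.toContinuousLinearMap T).bddAbove_rayleighQuotient
    exact ⟨C, by rintro _ ⟨y, rfl⟩; exact (le_abs_self _).trans (hC ⟨y, rfl⟩)⟩
  have hle := (le_ciSup hbdd ⟨v, hv⟩).trans (le_csSup A.finite_real_spectrum.bddAbove hmem)
  have hnorm : ‖v‖ ^ 2 = x ⬝ᵥ x := by
    rw [← real_inner_self_eq_norm_sq]; rfl
  have hinner : RCLike.re (inner ℝ (T v) v) = x ⬝ᵥ (A *ᵥ x) := by
    simp [T, v, EuclideanSpace.inner_toLp_toLp]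
  rw [hnorm, hinner, div_le_iff₀ (by rw [← hnorm]; positivity)] at hle
  exact hle

theorem Matrix.dotProduct_of_one_mulVec {R m n : Type*} [NonAssocSemiring R] [Fintype m]
    [Fintype n] (u : m → R) (w : n → R) :
    u ⬝ᵥ (of (fun _ _ => 1) *ᵥ w) = (∑ i, u i) * ∑ j, w j := by
  simp [dotProduct, mulVec, sum_mul]

namespace SimpleGraph

variable {R α β : Type*}

section graphJoin

variable (G : SimpleGraph α) (H : SimpleGraph β)

@[simp] theorem graphJoin_adj_inl_inl (a b : α) :
    (graphJoin G H).Adj (.inl a) (.inl b) ↔ G.Adj a b := Iff.rfl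

@[simp] theorem graphJoin_adj_inr_inr (a b : β) :
    (graphJoin G H).Adj (.inr a) (.inr b) ↔ H.Adj a b := Iff.rfl

@[simp] theorem graphJoin_adj_inl_inr (a : α) (b : β) : (graphJoin G H).Adj (.inl a) (.inr b) :=
  trivial

@[simp] theorem graphJoin_adj_inr_inl (a : β) (b : α) : (graphJoin G H).Adj (.inr a) (.inl b) :=
  trivial

variable [DecidableRel G.Adj] [DecidableRel H.Adj] [DecidableRel (graphJoin G H).Adj]

theorem adjMatrix_graphJoin [Zero R] [One R] :
    (graphJoin G H).adjMatrix R =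
      fromBlocks (G.adjMatrix R) (of fun _ _ => 1) (of fun _ _ => 1) (H.adjMatrix R) := by
  ext (a | a) (b | b) <;> simp [adjMatrix_apply]

theorem dotProduct_adjMatrix_graphJoin_mulVec [CommSemiring R] [Fintype α] [Fintype β]
    (x : α → R) (y : β → R) :
    Sum.elim x y ⬝ᵥ ((graphJoin G H).adjMatrix R *ᵥ Sum.elim x y) =
      x ⬝ᵥ (G.adjMatrix R *ᵥ x) + y ⬝ᵥ (H.adjMatrix R *ᵥ y) + 2 * (∑ i, x i) * ∑ j, y j := by
  rw [adjMatrix_graphJoin, fromBlocks_mulVec, sumElim_dotProduct_sumElim]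
  simp only [Sum.elim_comp_inl, Sum.elim_comp_inr, dotProduct_add, dotProduct_of_one_mulVec]
  ring

end graphJoin

theorem dotProduct_adjMatrix_mulVec_const [CommSemiring R] {V : Type*} [Fintype V]
    (G : SimpleGraph V) [DecidableRel G.Adj] [DecidableEq V] (a : R) :
    Function.const V a ⬝ᵥ (G.adjMatrix R *ᵥ Function.const V a) = 2 * #G.edgeFinset * a ^ 2 := by
  simp only [dotProduct, Function.const_apply, adjMatrix_mulVec_const_apply]
  rw [show (2 * #G.edgeFinset : R) = (2 * #G.edgeFinset : ℕ) by push_cast; rfl,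
    ← sum_degrees_eq_twice_card_edges, Nat.cast_sum, sum_mul]
  exact sum_congr rfl fun v _ => by ring

open scoped Classical in
theorem dotProduct_adjMatrix_mulVec_le_specRad {V : Type*} [Fintype V]
    [DecidableEq V] (G : SimpleGraph V) (x : V → ℝ) :
    x ⬝ᵥ (G.adjMatrix ℝ *ᵥ x) ≤ specRad G * (x ⬝ᵥ x) :=
  (G.isHermitian_adjMatrix ℝ).dotProduct_mulVec_self_le_sSup_spectrum x

end SimpleGraph

section matchingPlusIsolated

variable {m t : ℕ}

theorem matchingPlusIsolated_adj {i j : Fin m} :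
    (matchingPlusIsolated m t).Adj i j ↔
      i ≠ j ∧ (i : ℕ) < 2 * (t - 1) ∧ (j : ℕ) < 2 * (t - 1) ∧ (i : ℕ) / 2 = j / 2 :=
  Iff.rfl

variable [DecidableRel (matchingPlusIsolated m t).Adj]

theorem matchingPlusIsolated_degree (h : 2 * (t - 1) ≤ m) (i : Fin m) :
    (matchingPlusIsolated m t).degree i = if (i : ℕ) < 2 * (t - 1) then 1 else 0 := by
  rw [← SimpleGraph.card_neighborFinset_eq_degree]
  split_ifs with hi
  · -- the partner of `i` in the matching is `i xor 1`
    refine card_eq_one.2 ⟨⟨2 * (i / 2) + 1 - i % 2, by omega⟩, ?_⟩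
    ext j
    simp only [SimpleGraph.mem_neighborFinset, mem_singleton, matchingPlusIsolated_adj, ne_eq,
      Fin.ext_iff]
    omega
  · refine card_eq_zero.2 (eq_empty_of_forall_notMem fun j hj => ?_)
    exact hi (matchingPlusIsolated_adj.1 ((SimpleGraph.mem_neighborFinset _ _ _).1 hj)).2.1

theorem card_edgeFinset_matchingPlusIsolated (h : 2 * (t - 1) ≤ m) :
    #(matchingPlusIsolated m t).edgeFinset = t - 1 := by
  have hsum := (matchingPlusIsolated m t).sum_degrees_eq_twice_card_edges
  simp only [matchingPlusIsolated_degree h, sum_boole, Fin.card_filter_val_lt, Nat.cast_id] at hsum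
  omega

end matchingPlusIsolated

theorem spectral_radius_lower_bound (n t : ℕ) (hn : 4 ≤ n) (ht1 : 1 ≤ t)
    (ht2 : 2 * t ≤ n - 1) :
    Real.sqrt n + 1 - ((n : ℝ) - t) / ((n : ℝ) - Real.sqrt n) ≤
      specRad (graphJoin (⊥ : SimpleGraph Unit) (matchingPlusIsolated (n - 1) t)) := by
  classical
  set s := Real.sqrt n
  have hs : s * s = n := Real.mul_self_sqrt n.cast_nonneg
  have hs2 : 2 ≤ s := Real.le_sqrt_of_sq_le (by norm_num; exact_mod_cast hn)
  have hgap : 0 < (n : ℝ) - s := by nlinarith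
  have hn1 : ((n - 1 : ℕ) : ℝ) = n - 1 := by push_cast [show 1 ≤ n by omega]; ring
  have ht : ((t - 1 : ℕ) : ℝ) = t - 1 := by push_cast [ht1]; ring
  set x := Sum.elim (Function.const Unit (s - 1)) (Function.const (Fin (n - 1)) (1 : ℝ))
  have hquad : x ⬝ᵥ ((graphJoin ⊥ (matchingPlusIsolated (n - 1) t)).adjMatrix ℝ *ᵥ x) =
      2 * (n - 1) * (s - 1) + 2 * (t - 1) := by
    rw [SimpleGraph.dotProduct_adjMatrix_graphJoin_mulVec, SimpleGraph.adjMatrix_bot,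
      zero_mulVec, dotProduct_zero, SimpleGraph.dotProduct_adjMatrix_mulVec_const,
      card_edgeFinset_matchingPlusIsolated (by omega)]
    simp only [ht, one_pow, mul_one, zero_add, univ_unique, PUnit.default_eq_unit,
      Function.const_apply, sum_sub_distrib, sum_const, card_singleton,
      one_smul, card_univ, Fintype.card_fin, nsmul_eq_mul, hn1]
    ring
  have hnorm : x ⬝ᵥ x = 2 * (n - s) := by
    simp only [x, Function.const_one, sumElim_dotProduct_sumElim, dotProduct_pUnit,
      Function.const_apply, one_dotProduct_one, Fintype.card_fin, hn1]
    linear_combination hs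
  have hrayleigh := SimpleGraph.dotProduct_adjMatrix_mulVec_le_specRad
    (graphJoin ⊥ (matchingPlusIsolated (n - 1) t)) x
  rw [hquad, hnorm] at hrayleigh
  calc s + 1 - ((n : ℝ) - t) / (n - s)
      = (2 * (n - 1) * (s - 1) + 2 * (t - 1)) / (2 * (n - s)) := by
        field_simp [hgap.ne']
        linear_combination -hs
    _ ≤ _ := (div_le_iff₀ (by linarith)).2 hrayleigh
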